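/- arXiv:2602.19391 — 9 statements merged into one kernel-verified Lean document; each statement's English description precedes it below -/
import Mathlib

section
/- Let G be a group and r₀, r₁, r₂ ∈ G satisfying r₀² = r₁² = r₂² = 1, (r₀·r₂)² = 1, and (r₀·r₁)^p = 1 for some odd natural number p. Then the subgroup of G generated by the two elements r₀·r₂·r₁ and r₁·r₂ equals the subgroup generated by {r₀, r₁, r₂}. -/
/-- If a group contains involutions `r₀, r₁, r₂` with `(r₀*r₂)² = 1` and `(r₀*r₁)^p = 1`
for some odd `p`, then the subgroup generated by `r₀*r₂*r₁` and `r₁*r₂` (the combinatorial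
rotation subgroup of the Petrie dual) equals the subgroup generated by `r₀, r₁, r₂`. -/
theorem petrie_dual_not_directly_regular {G : Type*} [Group G] (r₀ r₁ r₂ : G) (p : ℕ)
    (hp : Odd p)
    (h0 : r₀ ^ 2 = 1) (h1 : r₁ ^ 2 = 1) (h2 : r₂ ^ 2 = 1)
    (h02 : (r₀ * r₂) ^ 2 = 1) (h01 : (r₀ * r₁) ^ p = 1) :
    Subgroup.closure ({r₀ * r₂ * r₁, r₁ * r₂} : Set G) =
      Subgroup.closure ({r₀, r₁, r₂} : Set G) := by
  have hh0 : r₀ * r₀ = 1 := by rw [← sq]; exact h0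
  have hh1 : r₁ * r₁ = 1 := by rw [← sq]; exact h1
  have hh2 : r₂ * r₂ = 1 := by rw [← sq]; exact h2
  have hi0 : r₀⁻¹ = r₀ := by rw [inv_eq_iff_mul_eq_one]; exact hh0
  have hi1 : r₁⁻¹ = r₁ := by rw [inv_eq_iff_mul_eq_one]; exact hh1
  have hi2 : r₂⁻¹ = r₂ := by rw [inv_eq_iff_mul_eq_one]; exact hh2
  have hcomm : r₀ * r₂ = r₂ * r₀ := by
    have h : (r₀ * r₂)⁻¹ = r₀ * r₂ := by
      rw [inv_eq_iff_mul_eq_one, ← sq]; exact h02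
    calc r₀ * r₂ = (r₀ * r₂)⁻¹ := h.symm
      _ = r₂⁻¹ * r₀⁻¹ := mul_inv_rev _ _
      _ = r₂ * r₀ := by rw [hi0, hi2]
  have ha : r₀ * r₂ * r₁ ∈ Subgroup.closure ({r₀ * r₂ * r₁, r₁ * r₂} : Set G) :=
    Subgroup.subset_closure (Set.mem_insert _ _)
  have hb : r₁ * r₂ ∈ Subgroup.closure ({r₀ * r₂ * r₁, r₁ * r₂} : Set G) :=
    Subgroup.subset_closure (Set.mem_insert_of_mem _ rfl)
  have hr0 : r₀ ∈ Subgroup.closure ({r₀ * r₂ * r₁, r₁ * r₂} : Set G) := by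
    have e : r₀ = (r₀ * r₂ * r₁) * (r₁ * r₂) := by
      calc r₀ = r₀ * r₂ * (r₁ * r₁) * r₂ := by rw [hh1, mul_one, mul_assoc, hh2, mul_one]
        _ = (r₀ * r₂ * r₁) * (r₁ * r₂) := by group
    have := mul_mem ha hb; rwa [← e] at this
  have hs2 : (r₀ * r₁) * (r₀ * r₁) ∈ Subgroup.closure ({r₀ * r₂ * r₁, r₁ * r₂} : Set G) := by
    have e : (r₀ * r₁) * (r₀ * r₁) = r₀ * (r₁ * r₂) * r₀ * (r₁ * r₂)⁻¹ := by
      rw [mul_inv_rev, hi1, hi2]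
      calc r₀ * r₁ * (r₀ * r₁)
          = r₀ * r₁ * ((r₀ * r₂) * r₂) * r₁ := by rw [mul_assoc r₀ r₂, hh2, mul_one]; group
        _ = r₀ * r₁ * ((r₂ * r₀) * r₂) * r₁ := by rw [hcomm]
        _ = r₀ * (r₁ * r₂) * r₀ * (r₂ * r₁) := by group
    rw [e]
    exact mul_mem (mul_mem (mul_mem hr0 hb) hr0) (inv_mem hb)
  have hs : r₀ * r₁ ∈ Subgroup.closure ({r₀ * r₂ * r₁, r₁ * r₂} : Set G) := by
    obtain ⟨k, hk⟩ := hp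
    have e : ((r₀ * r₁) * (r₀ * r₁)) ^ k * (r₀ * r₁) = 1 := by
      have : ((r₀ * r₁) * (r₀ * r₁)) ^ k = (r₀ * r₁) ^ (2 * k) := by
        rw [pow_mul, sq]
      rw [this, ← pow_succ, ← hk]; exact h01
    have : r₀ * r₁ = (((r₀ * r₁) * (r₀ * r₁)) ^ k)⁻¹ := eq_inv_of_mul_eq_one_right e
    rw [this]
    exact inv_mem (pow_mem hs2 k)
  have hr1 : r₁ ∈ Subgroup.closure ({r₀ * r₂ * r₁, r₁ * r₂} : Set G) := by
    have e : r₁ = r₀ * (r₀ * r₁) := by rw [← mul_assoc, hh0, one_mul]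
    have := mul_mem hr0 hs; rwa [← e] at this
  have hr2 : r₂ ∈ Subgroup.closure ({r₀ * r₂ * r₁, r₁ * r₂} : Set G) := by
    have e : r₂ = r₁ * (r₁ * r₂) := by rw [← mul_assoc, hh1, one_mul]
    have := mul_mem hr1 hb; rwa [← e] at this
  apply le_antisymm
  · rw [Subgroup.closure_le]
    rintro x (rfl | rfl)
    · exact mul_mem (mul_mem (Subgroup.subset_closure (by simp))
        (Subgroup.subset_closure (by simp))) (Subgroup.subset_closure (by simp))
    · exact mul_mem (Subgroup.subset_closure (by simp)) (Subgroup.subset_closure (by simp))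
  · rw [Subgroup.closure_le]
    rintro x (rfl | rfl | rfl)
    · exact hr0
    · exact hr1
    · exact hr2
end

section
/- Let rels be a set of elements of the free group FreeGroup (Fin 3) on three generators which contains the square (FreeGroup.of i)² for each i ∈ Fin 3. Let G := PresentedGroup rels, with generators rᵢ := PresentedGroup.of i, let π : FreeGroup (Fin 3) →* Multiplicative (ZMod 2) be the homomorphism sending each generator FreeGroup.of i to the nontrivial element, and let H be the subgroup of G generated by all products rᵢ·rⱼ for i, j ∈ Fin 3. Then H has index 2 in G if and only if every element of rels lies in the kernel of π (i.e., every relator has even length as a word in the generators); moreover, if some relator does not lie in the kernel of π, then H = G. -/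
/-!
Since every generator `rᵢ` is an involution, `g rᵢ = (g r₀)(r₀ rᵢ)` and `g r₀ rᵢ = g (r₀ rᵢ)`,
so `H ∪ H r₀` is closed under right multiplication by generators and is therefore all of `G`.
Hence `H` has index 2 exactly when `r₀ ∉ H`, and otherwise `H = G`. If all relators are even, the
parity map descends to `G → ℤ/2`, killing `H` but not `r₀`. Conversely, if `H` has index 2, then
`g ∈ H` is multiplicative in the sense `gh ∈ H ↔ (g ∈ H ↔ h ∈ H)` and fails on every generator,
so a word maps into `H` exactly when it is even; relators map to `1 ∈ H`, so they are even.
-/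

open Subgroup Set

def FreeGroup.parity {ι : Type*} : FreeGroup ι →* Multiplicative (ZMod 2) :=
  FreeGroup.lift fun _ => Multiplicative.ofAdd 1

namespace Subgroup

variable {G ι : Type*} [Group G]

def rotationSubgroup (f : ι → G) : Subgroup G :=
  closure {x | ∃ i j, x = f i * f j}

variable {f : ι → G}

theorem mul_mem_rotationSubgroup (i j : ι) : f i * f j ∈ rotationSubgroup f :=
  subset_closure ⟨i, j, rfl⟩

theorem rotationSubgroup_eq_top_of_mem (hf : ∀ i, f i ^ 2 = 1)
    (hgen : closure (range f) = ⊤) {i₀ : ι} (h : f i₀ ∈ rotationSubgroup f) :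
    rotationSubgroup f = ⊤ := by
  rw [eq_top_iff, ← hgen, closure_le]
  rintro _ ⟨i, rfl⟩
  simpa [mul_assoc, ← sq, hf] using mul_mem (mul_mem_rotationSubgroup i i₀) h

theorem mem_or_mul_mem_rotationSubgroup (hf : ∀ i, f i ^ 2 = 1)
    (hgen : closure (range f) = ⊤) (i₀ : ι) (g : G) :
    g ∈ rotationSubgroup f ∨ g * f i₀ ∈ rotationSubgroup f := by
  have step (x : G) (i : ι) (hx : x ∈ rotationSubgroup f ∨ x * f i₀ ∈ rotationSubgroup f) :
      x * f i ∈ rotationSubgroup f ∨ x * f i * f i₀ ∈ rotationSubgroup f := by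
    rcases hx with hx | hx
    · rw [mul_assoc]
      exact .inr (mul_mem hx (mul_mem_rotationSubgroup i i₀))
    · refine .inl ?_
      have := mul_mem hx (mul_mem_rotationSubgroup i₀ i)
      rwa [mul_assoc, ← mul_assoc (f i₀), ← sq, hf, one_mul] at this
  have hg : g ∈ closure (range f) := hgen ▸ mem_top g
  induction hg using closure_induction_right with
  | one => exact .inl (one_mem _)
  | mul_right x _ _ hy ih =>
    obtain ⟨i, rfl⟩ := hy
    exact step x i ih
  | mul_inv_cancel x _ _ hy ih =>
    obtain ⟨i, rfl⟩ := hy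
    rw [inv_eq_of_mul_eq_one_right (by rw [← sq, hf])]
    exact step x i ih

theorem index_rotationSubgroup_eq_two_iff (hf : ∀ i, f i ^ 2 = 1)
    (hgen : closure (range f) = ⊤) (i₀ : ι) :
    (rotationSubgroup f).index = 2 ↔ f i₀ ∉ rotationSubgroup f := by
  refine ⟨fun h2 hmem => ?_, fun h => ?_⟩
  · rw [rotationSubgroup_eq_top_of_mem hf hgen hmem, index_top] at h2
    omega
  · exact index_eq_two_iff_exists_notMem_and.2
      ⟨f i₀, h, fun g => (mem_or_mul_mem_rotationSubgroup hf hgen i₀ g).symm⟩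

theorem notMem_rotationSubgroup_of_index_eq_two (hgen : closure (range f) = ⊤)
    (h2 : (rotationSubgroup f).index = 2) (i : ι) : f i ∉ rotationSubgroup f := by
  intro hi
  have hall : range f ⊆ rotationSubgroup f := by
    rintro _ ⟨j, rfl⟩
    exact ((mul_mem_iff_of_index_two h2).1 (mul_mem_rotationSubgroup i j)).1 hi
  rw [← closure_le, hgen, top_le_iff] at hall
  rw [hall, index_top] at h2
  omega

theorem lift_mem_rotationSubgroup_iff (hgen : closure (range f) = ⊤)
    (h2 : (rotationSubgroup f).index = 2) (w : FreeGroup ι) :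
    FreeGroup.lift f w ∈ rotationSubgroup f ↔ FreeGroup.parity w = 1 := by
  induction w with
  | C1 => simp
  | of i =>
    simp only [FreeGroup.lift_apply_of, FreeGroup.parity,
      notMem_rotationSubgroup_of_index_eq_two hgen h2 i, false_iff]
    decide
  | inv_of i ih => rw [map_inv, inv_mem_iff, ih, map_inv, inv_eq_one]
  | mul x y ihx ihy =>
    rw [map_mul, mul_mem_iff_of_index_two h2, ihx, ihy, map_mul]
    generalize FreeGroup.parity x = a
    generalize FreeGroup.parity y = b
    revert a b
    decide

end Subgroup

namespace PresentedGroup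

variable {ι : Type*} {rels : Set (FreeGroup ι)}

theorem of_sq_eq_one (hsq : ∀ i, FreeGroup.of i ^ 2 ∈ rels) (i : ι) :
    (of i : PresentedGroup rels) ^ 2 = 1 := by
  rw [of, ← map_pow]
  exact one_of_mem (hsq i)

theorem lift_of_eq_mk : FreeGroup.lift (of : ι → PresentedGroup rels) = mk rels :=
  FreeGroup.ext_hom _ _ fun _ => FreeGroup.lift_apply_of

theorem of_notMem_rotationSubgroup (heven : ∀ r ∈ rels, FreeGroup.parity r = 1) (i : ι) :
    of i ∉ rotationSubgroup (of : ι → PresentedGroup rels) := by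
  let φ : PresentedGroup rels →* Multiplicative (ZMod 2) := toGroup heven
  have hφ (j : ι) : φ (of j) = Multiplicative.ofAdd 1 := toGroup.of heven
  have hker : rotationSubgroup of ≤ φ.ker := by
    refine (closure_le _).2 ?_
    rintro _ ⟨j, k, rfl⟩
    rw [SetLike.mem_coe, MonoidHom.mem_ker, map_mul, hφ, hφ]
    decide
  intro hi
  have := MonoidHom.mem_ker.1 (hker hi)
  rw [hφ] at this
  exact absurd this (by decide)

theorem index_rotationSubgroup_eq_two_iff (hsq : ∀ i, FreeGroup.of i ^ 2 ∈ rels) (i₀ : ι) :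
    (rotationSubgroup (of : ι → PresentedGroup rels)).index = 2 ↔
      ∀ r ∈ rels, FreeGroup.parity r = 1 := by
  refine ⟨fun h2 r hr => ?_, fun heven => ?_⟩
  · rw [← lift_mem_rotationSubgroup_iff (closure_range_of rels) h2, lift_of_eq_mk,
      one_of_mem hr]
    exact one_mem _
  · exact (Subgroup.index_rotationSubgroup_eq_two_iff (of_sq_eq_one hsq) (closure_range_of rels)
      i₀).2 (of_notMem_rotationSubgroup heven i₀)

end PresentedGroup

/-- For the presented group `G = ⟨r₀,r₁,r₂ ∣ rels⟩` in which the squares of the generators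
are relators, the subgroup `H` generated by all products `rᵢ·rⱼ` has index 2 in `G` if and
only if every relator has even length (lies in the kernel of the map to `ℤ/2` sending every
generator to the nontrivial element); and if some relator has odd length then `H = G`. -/
theorem rotation_subgroup_index_two_iff_even_relators (rels : Set (FreeGroup (Fin 3)))
    (hsq : ∀ i : Fin 3, (FreeGroup.of i) ^ 2 ∈ rels)
    (π : FreeGroup (Fin 3) →* Multiplicative (ZMod 2))
    (hπ : π = FreeGroup.lift fun _ => Multiplicative.ofAdd 1)
    (H : Subgroup (PresentedGroup rels))
    (hH : H = Subgroup.closure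
      {x | ∃ i j : Fin 3,
        x = (PresentedGroup.of i : PresentedGroup rels) * PresentedGroup.of j}) :
    (H.index = 2 ↔ ∀ r ∈ rels, r ∈ π.ker) ∧
    ((∃ r ∈ rels, r ∉ π.ker) → H = ⊤) := by
  subst hπ hH
  have hf := PresentedGroup.of_sq_eq_one hsq
  have hgen := PresentedGroup.closure_range_of rels
  have heven_iff := PresentedGroup.index_rotationSubgroup_eq_two_iff hsq 0
  refine ⟨heven_iff, fun ⟨r, hr, hodd⟩ => rotationSubgroup_eq_top_of_mem hf hgen (i₀ := 0) ?_⟩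
  by_contra h0
  exact hodd (heven_iff.1 ((index_rotationSubgroup_eq_two_iff hf hgen 0).2 h0) r hr)
end

section
/- Let Π be a nonempty affine subspace of EuclideanSpace ℝ (Fin 3) whose direction is a 2-dimensional linear subspace (an affine plane), let s₀ be the orthogonal reflection of E³ across Π, let G be a group of isometries of E³ containing s₀, and let s₁ ∈ G. Then there is no point v ∈ E³ such that the stabilizer of v in G is trivial and dist v (s₁ v) = dist v (s₀ v) = dist (s₁ v) (s₀ v). Equivalently: if v has trivial stabilizer in G (so that s₀ v ≠ v), the triangle with vertices v, s₀ v, s₁ v cannot be equilateral, because equidistance of s₁ v from v and s₀ v forces s₁ v to lie on Π and hence s₀ (s₁ v) = s₁ v, contradicting the triviality of the stabilizer of s₁ v. -/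
/-!
If `v` has trivial stabilizer, `s₀ v ≠ v`, so `v` lies off the plane. The points equidistant from
`v` and its mirror image form their perpendicular bisector, which is the plane itself; so an
equilateral triangle `v, s₀ v, s₁ v` puts `s₁ v` on the plane. Then `s₀` fixes `s₁ v`, i.e.
`s₁⁻¹ s₀ s₁` fixes `v`, forcing `s₀ = 1`, which is impossible for a reflection in a proper plane.
-/

open Module EuclideanGeometry

namespace AffineSubspace

variable {k V P : Type*} [DivisionRing k] [AddCommGroup V] [Module k V] [AddTorsor V P]

theorem exists_notMem_of_finrank_direction_lt {s : AffineSubspace k P}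
    (h : finrank k s.direction < finrank k V) : ∃ p, p ∉ s := by
  by_contra! hall
  have htop : s = ⊤ := eq_top_iff.2 fun p _ => hall p
  rw [htop, direction_top, finrank_top] at h
  exact lt_irrefl _ h

end AffineSubspace

namespace EuclideanGeometry

variable {V P : Type*} [NormedAddCommGroup V] [InnerProductSpace ℝ V] [FiniteDimensional ℝ V]
  [MetricSpace P] [NormedAddTorsor V P]

theorem perpBisector_reflection_eq_of_notMem {s : AffineSubspace ℝ P} [Nonempty s]
    (hs : finrank ℝ s.direction + 1 = finrank ℝ V) {p : P} (hp : p ∉ s) :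
    AffineSubspace.perpBisector p (reflection s p) = s := by
  have hle : s ≤ AffineSubspace.perpBisector p (reflection s p) := fun c hc => by
    rw [AffineSubspace.mem_perpBisector_iff_dist_eq, dist_reflection_eq_of_mem s hc]
  have hne : reflection s p -ᵥ p ≠ 0 := by
    rwa [vsub_ne_zero, Ne, reflection_eq_self_iff]
  have hfin : finrank ℝ (ℝ ∙ (reflection s p -ᵥ p))ᗮ = finrank ℝ s.direction :=
    Submodule.finrank_add_finrank_orthogonal' (by rw [finrank_span_singleton hne, add_comm, hs])
  refine (AffineSubspace.eq_of_direction_eq_of_nonempty_of_le ?_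
    (Set.nonempty_coe_sort.1 ‹_›) hle).symm
  rw [AffineSubspace.direction_perpBisector]
  exact Submodule.eq_of_le_of_finrank_eq
    (by simpa using AffineSubspace.direction_le hle) hfin.symm

theorem mem_of_dist_eq_dist_reflection {s : AffineSubspace ℝ P} [Nonempty s]
    (hs : finrank ℝ s.direction + 1 = finrank ℝ V) {p c : P} (hp : p ∉ s)
    (hc : dist c p = dist c (reflection s p)) : c ∈ s := by
  rw [← perpBisector_reflection_eq_of_notMem hs hp]
  exact AffineSubspace.mem_perpBisector_iff_dist_eq.2 hc

end EuclideanGeometry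

theorem IsometryEquiv.eq_one_of_mem_of_apply_apply_eq {P : Type*} [PseudoEMetricSpace P]
    {G : Subgroup (P ≃ᵢ P)} {v : P} (hfree : ∀ g ∈ G, g v = v → g = 1)
    {g h : P ≃ᵢ P} (hg : g ∈ G) (hh : h ∈ G) (hfix : g (h v) = h v) : g = 1 := by
  have hconj : h⁻¹ * g * h = 1 :=
    hfree _ (mul_mem (mul_mem (inv_mem hh) hg) hh) (by simp [hfix])
  simpa [mul_assoc, inv_mul_eq_one] using hconj

/-- If `s₀` is the orthogonal reflection of `E³` across an affine plane, `G` is a group of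
isometries of `E³` containing `s₀`, and `s₁ ∈ G`, then there is no point `v` with trivial
stabilizer in `G` for which the triangle `v`, `s₀ v`, `s₁ v` is equilateral. -/
theorem no_uniform_snub_of_plane_reflection
    (plane : AffineSubspace ℝ (EuclideanSpace ℝ (Fin 3))) [Nonempty plane]
    (hdim : Module.finrank ℝ plane.direction = 2)
    (G : Subgroup (EuclideanSpace ℝ (Fin 3) ≃ᵢ EuclideanSpace ℝ (Fin 3)))
    (s₀ : EuclideanSpace ℝ (Fin 3) ≃ᵢ EuclideanSpace ℝ (Fin 3))
    (hs₀ : ∀ x, s₀ x = EuclideanGeometry.reflection plane x)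
    (hs₀G : s₀ ∈ G)
    (s₁ : EuclideanSpace ℝ (Fin 3) ≃ᵢ EuclideanSpace ℝ (Fin 3)) (hs₁G : s₁ ∈ G) :
    ¬ ∃ v : EuclideanSpace ℝ (Fin 3),
        (∀ g : EuclideanSpace ℝ (Fin 3) ≃ᵢ EuclideanSpace ℝ (Fin 3), g ∈ G → g v = v → g = 1) ∧
        dist v (s₁ v) = dist v (s₀ v) ∧
        dist v (s₀ v) = dist (s₁ v) (s₀ v) := by
  rintro ⟨v, hfree, hv₁, hv₀⟩
  have hplane : finrank ℝ plane.direction + 1 = finrank ℝ (EuclideanSpace ℝ (Fin 3)) := by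
    simp [hdim]
  have hfixes : ∀ x, s₀ x = x ↔ x ∈ plane := fun x => by rw [hs₀, reflection_eq_self_iff]
  have hs₀ne : s₀ ≠ 1 := by
    obtain ⟨x, hx⟩ := AffineSubspace.exists_notMem_of_finrank_direction_lt (s := plane) (by omega)
    rintro rfl
    exact hx ((hfixes x).1 rfl)
  have hv : v ∉ plane := fun hv => hs₀ne (hfree s₀ hs₀G ((hfixes v).2 hv))
  have hs₁v : s₁ v ∈ plane :=
    mem_of_dist_eq_dist_reflection hplane hv (by rw [← hs₀, dist_comm, hv₁, hv₀])
  exact hs₀ne (IsometryEquiv.eq_one_of_mem_of_apply_apply_eq hfree hs₀G hs₁G ((hfixes _).2 hs₁v))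
end

section
/- Let G be a group acting on a set X, let s₁, s₂ ∈ G, set s₀ := s₁ * s₂, and assume s₀ ≠ 1, s₁ ≠ 1, s₂ ≠ 1 and that the cyclic subgroups ⟨s₀⟩, ⟨s₁⟩, ⟨s₂⟩ intersect pairwise trivially. Let v ∈ X have trivial stabilizer in G, and set e₀ := {v, s₀ • v}, e₁ := {v, s₁ • v}, e₂ := {v, s₂ • v} (subsets of X, with G acting on subsets elementwise). Then for all g, h ∈ G and all i ≠ j in {0, 1, 2}, g • eᵢ ≠ h • eⱼ; that is, the G-orbits of the three base edges are pairwise disjoint, so every edge of the snub has a uniquely determined type. -/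
open Pointwise

/-- The base edges of the snub: `e₀ = {v, (s₁s₂)•v}`, `e₁ = {v, s₁•v}`, `e₂ = {v, s₂•v}`. -/
def snubBaseEdge {G X : Type*} [Group G] [MulAction G X] (s₁ s₂ : G) (v : X) :
    Fin 3 → Set X :=
  ![{v, (s₁ * s₂) • v}, {v, s₁ • v}, {v, s₂ • v}]

private lemma snub_pair_ne {G X : Type*} [Group G] [MulAction G X]
    (s t : G) (hs : s ≠ 1)
    (hst : Subgroup.zpowers s ⊓ Subgroup.zpowers t = ⊥)
    (v : X) (hv : ∀ g : G, g • v = v → g = 1) (g h : G) :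
    g • ({v, s • v} : Set X) ≠ h • ({v, t • v} : Set X) := by
  intro heq
  have free : ∀ a b : G, a • v = b • v → a = b := by
    intro a b hab
    have : (b⁻¹ * a) • v = v := by rw [mul_smul, hab, inv_smul_smul]
    have := hv _ this
    rwa [inv_mul_eq_one, eq_comm] at this
  have heq' : ({g • v, (g * s) • v} : Set X) = {h • v, (h * t) • v} := by
    simpa [Set.smul_set_insert, Set.smul_set_singleton, mul_smul] using heq
  have hmem : s ∈ Subgroup.zpowers s ⊓ Subgroup.zpowers t := by
    rw [Set.pair_eq_pair_iff] at heq'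
    rcases heq' with ⟨h1, h2⟩ | ⟨h1, h2⟩
    · have hgh : g = h := free _ _ h1
      have : g * s = h * t := free _ _ h2
      rw [hgh] at this
      have hst' := mul_left_cancel this
      exact ⟨Subgroup.mem_zpowers s, hst' ▸ Subgroup.mem_zpowers t⟩
    · have hgh : g = h * t := free _ _ h1
      have h3 : g * s = h := free _ _ h2
      have : s = t⁻¹ := by
        rw [hgh] at h3
        rw [← eq_inv_mul_iff_mul_eq] at h3
        simpa using h3
      exact ⟨Subgroup.mem_zpowers s, this ▸ Subgroup.inv_mem _ (Subgroup.mem_zpowers t)⟩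
  rw [hst, Subgroup.mem_bot] at hmem
  exact hs hmem

/-- If `s₀ := s₁s₂`, `s₁`, `s₂` are nontrivial, the cyclic subgroups they generate intersect
pairwise trivially, and `v` has trivial stabilizer, then the `G`-orbits of the three base
edges are pairwise disjoint: every edge of the snub has a uniquely determined type. -/
theorem snub_edges_have_unique_type {G X : Type*} [Group G] [MulAction G X]
    (s₁ s₂ : G) (hs0 : s₁ * s₂ ≠ 1) (hs1 : s₁ ≠ 1) (hs2 : s₂ ≠ 1)
    (h01 : Subgroup.zpowers (s₁ * s₂) ⊓ Subgroup.zpowers s₁ = ⊥)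
    (h02 : Subgroup.zpowers (s₁ * s₂) ⊓ Subgroup.zpowers s₂ = ⊥)
    (h12 : Subgroup.zpowers s₁ ⊓ Subgroup.zpowers s₂ = ⊥)
    (v : X) (hv : ∀ g : G, g • v = v → g = 1) :
    ∀ (g h : G) (i j : Fin 3), i ≠ j →
      g • snubBaseEdge s₁ s₂ v i ≠ h • snubBaseEdge s₁ s₂ v j := by
  have h10 := inf_comm (Subgroup.zpowers (s₁ * s₂)) (Subgroup.zpowers s₁) ▸ h01
  have h20 := inf_comm (Subgroup.zpowers (s₁ * s₂)) (Subgroup.zpowers s₂) ▸ h02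
  have h21 := inf_comm (Subgroup.zpowers s₁) (Subgroup.zpowers s₂) ▸ h12
  intro g h i j hij
  fin_cases i <;> fin_cases j <;> simp_all [snubBaseEdge] <;>
    first
      | exact snub_pair_ne _ _ hs0 h01 v hv g h
      | exact snub_pair_ne _ _ hs0 h02 v hv g h
      | exact snub_pair_ne _ _ hs1 h10 v hv g h
      | exact snub_pair_ne _ _ hs1 h12 v hv g h
      | exact snub_pair_ne _ _ hs2 h20 v hv g h
      | exact snub_pair_ne _ _ hs2 h21 v hv g h
end

section
/- Let G be a group acting on a set X, let v ∈ X have trivial stabilizer in G, and let s ∈ G. Define F := { {sᵏ • v, sᵏ⁺¹ • v} : k ∈ ℤ }, the orbit of the edge {v, s • v} under the cyclic subgroup ⟨s⟩, regarded as a set of subsets of X. Then the stabilizer of F in G (under the induced action of G on sets of subsets of X) equals the cyclic subgroup ⟨s⟩ generated by s. -/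
open Pointwise

/-- Let `v` have trivial stabilizer in `G` and let `s ∈ G`. The stabilizer of the face
`F = { {sᵏ•v, sᵏ⁺¹•v} : k ∈ ℤ }` (the orbit of the edge `{v, s•v}` under `⟨s⟩`), for the
induced action of `G` on sets of subsets of `X`, is the cyclic subgroup generated by `s`. -/
theorem snub_face_stabilizer_eq_zpowers {G X : Type*} [Group G] [MulAction G X]
    (v : X) (hv : ∀ g : G, g • v = v → g = 1) (s : G) :
    MulAction.stabilizer G
        ({E : Set X | ∃ k : ℤ, E = ({s ^ k • v, s ^ (k + 1) • v} : Set X)} : Set (Set X)) =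
      Subgroup.zpowers s := by
  have key : ∀ (n k : ℤ), s ^ n • ({s ^ k • v, s ^ (k + 1) • v} : Set X)
      = ({s ^ (n + k) • v, s ^ (n + k + 1) • v} : Set X) := by
    intro n k
    rw [Set.smul_set_insert, Set.smul_set_singleton, smul_smul, smul_smul, ← zpow_add,
      ← zpow_add]
    ring_nf
  ext g
  simp only [MulAction.mem_stabilizer_iff, Subgroup.mem_zpowers_iff]
  constructor
  · intro h
    have h0 : g • ({s ^ (0:ℤ) • v, s ^ ((0:ℤ) + 1) • v} : Set X) ∈
        {E : Set X | ∃ k : ℤ, E = ({s ^ k • v, s ^ (k + 1) • v} : Set X)} := by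
      rw [← h]
      exact Set.smul_mem_smul_set ⟨0, rfl⟩
    obtain ⟨k, hk⟩ := h0
    have hmem : g • (s ^ (0:ℤ) • v) ∈ ({s ^ k • v, s ^ (k + 1) • v} : Set X) := by
      rw [← hk]
      exact Set.smul_mem_smul_set (Set.mem_insert _ _)
    simp only [zpow_zero, one_smul] at hmem
    rcases hmem with h1 | h1
    · refine ⟨k, ?_⟩
      have : (s ^ k)⁻¹ * g = 1 := by
        apply hv
        rw [mul_smul, h1, inv_smul_smul]
      exact (inv_mul_eq_one.mp this)
    · refine ⟨k + 1, ?_⟩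
      have : (s ^ (k + 1))⁻¹ * g = 1 := by
        apply hv
        rw [mul_smul, h1, inv_smul_smul]
      exact (inv_mul_eq_one.mp this)
  · rintro ⟨n, rfl⟩
    ext E
    constructor
    · rintro ⟨E', ⟨k, rfl⟩, rfl⟩
      exact ⟨n + k, (key n k)⟩
    · rintro ⟨k, rfl⟩
      refine ⟨{s ^ (k - n) • v, s ^ (k - n + 1) • v}, ⟨k - n, rfl⟩, ?_⟩
      show s ^ n • _ = _
      rw [key]
      ring_nf
end

section
/- Let G be a group acting on a set X, let s₁, s₂ ∈ G, set s₀ := s₁ * s₂, and assume s₀² = 1, s₀ ≠ 1, s₁ ≠ 1, s₂ ≠ 1 and that the cyclic subgroups ⟨s₀⟩, ⟨s₁⟩, ⟨s₂⟩ intersect pairwise trivially. Let v ∈ X have trivial stabilizer, set e₀ := {v, s₀ • v}, e₁ := {v, s₁ • v}, e₂ := {v, s₂ • v}, and F₂⁰ := {e₀, e₁, s₁ • e₂} (a set of three subsets of X). Then the stabilizer of F₂⁰ in G (under the induced action on sets of subsets) is trivial; in particular s₀ • F₂⁰ ≠ F₂⁰. -/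
/-!
The three edges of `F₂⁰ = {e₀, e₁, s₁ • e₂}` are the sides of the triangle with vertices
`v, s₀ • v, s₁ • v`, since `s₁ • e₂ = {s₁ • v, s₀ • v}`. An element `g` fixing the face permutes
these vertices; as `v` has trivial stabilizer, `g • v ∈ {v, s₀ • v, s₁ • v}` forces
`g ∈ {1, s₀, s₁}`, and `g = s₀` resp. `g = s₁` would send `s₁ • v` resp. `s₀ • v` to a vertex,
i.e. `s₀s₁ ∈ {1, s₀, s₁}` resp. `s₁s₀ ∈ {1, s₀, s₁}`. This is excluded by `s₀, s₁ ≠ 1` and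
`s₀s₁ ≠ 1`, the latter because `⟨s₀⟩ ∩ ⟨s₁⟩ = 1`.
-/

open Pointwise

/-- The type-0 base face `F₂⁰ = {e₀, e₁, s₁ • e₂}` of the snub. -/
def snubBaseFaceZero {G X : Type*} [Group G] [MulAction G X] (s₁ s₂ : G) (v : X) :
    Set (Set X) :=
  {snubBaseEdge s₁ s₂ v 0, snubBaseEdge s₁ s₂ v 1, s₁ • snubBaseEdge s₁ s₂ v 2}

namespace MulAction

variable {G X : Type*} [Group G] [MulAction G X]

theorem stabilizer_le_stabilizer_sUnion (S : Set (Set X)) :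
    stabilizer G S ≤ stabilizer G (⋃₀ S) := by
  intro g hg
  rw [mem_stabilizer_iff] at hg ⊢
  rw [Set.smul_set_sUnion, ← Set.sUnion_image]
  exact congrArg Set.sUnion hg

theorem smul_left_injective_of_forall_smul_eq_self {v : X} (hv : ∀ g : G, g • v = v → g = 1) :
    Function.Injective (· • v : G → X) := by
  intro g h hgh
  have : (h⁻¹ * g) • v = v := by
    rw [mul_smul, show g • v = h • v from hgh, inv_smul_smul]
  exact (inv_mul_eq_one.mp (hv _ this)).symm

theorem smul_mem_triangle_iff {v : X} (hv : ∀ g : G, g • v = v → g = 1) {a b g : G} :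
    g • v ∈ ({v, a • v, b • v} : Set X) ↔ g = 1 ∨ g = a ∨ g = b := by
  have hT : ({v, a • v, b • v} : Set X) = (· • v) '' {1, a, b} := by
    simp only [Set.image_insert_eq, Set.image_singleton, one_smul]
  rw [hT, (smul_left_injective_of_forall_smul_eq_self hv).mem_set_image]
  rfl

theorem stabilizer_triangle_eq_bot {v : X} (hv : ∀ g : G, g • v = v → g = 1) {a b : G}
    (ha : a ≠ 1) (hb : b ≠ 1) (hab : a * b ≠ 1) :
    stabilizer G ({v, a • v, b • v} : Set X) = ⊥ := by
  refine (Subgroup.eq_bot_iff_forall _).mpr fun g hg => ?_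
  have hT : ∀ x ∈ ({v, a • v, b • v} : Set X), g • x ∈ ({v, a • v, b • v} : Set X) :=
    fun x hx => (mem_stabilizer_iff.mp hg) ▸ Set.smul_mem_smul_set hx
  have hga := hT (a • v) (by simp)
  have hgb := hT (b • v) (by simp)
  rw [smul_smul, smul_mem_triangle_iff hv] at hga hgb
  rcases (smul_mem_triangle_iff hv).mp (hT v (by simp)) with rfl | rfl | rfl
  · rfl
  · rcases hgb with h | h | h
    · exact absurd h hab
    · exact absurd (mul_eq_left.mp h) hb
    · exact absurd (mul_eq_right.mp h) ha
  · rcases hga with h | h | h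
    · exact absurd (mul_eq_one_comm.mp h) hab
    · exact absurd (mul_eq_right.mp h) hb
    · exact absurd (mul_eq_left.mp h) ha

end MulAction

theorem mul_ne_one_of_zpowers_inf_eq_bot {G : Type*} [Group G] {a b : G}
    (hab : Subgroup.zpowers a ⊓ Subgroup.zpowers b = ⊥) (hb : b ≠ 1) : a * b ≠ 1 := by
  intro h
  have hb_mem : b ∈ Subgroup.zpowers a ⊓ Subgroup.zpowers b :=
    Subgroup.mem_inf.mpr ⟨eq_inv_of_mul_eq_one_right h ▸ Subgroup.inv_mem _ (Subgroup.mem_zpowers a),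
      Subgroup.mem_zpowers b⟩
  exact hb (by rwa [hab, Subgroup.mem_bot] at hb_mem)

theorem sUnion_snubBaseFaceZero {G X : Type*} [Group G] [MulAction G X] (s₁ s₂ : G) (v : X) :
    ⋃₀ snubBaseFaceZero s₁ s₂ v = {v, (s₁ * s₂) • v, s₁ • v} := by
  ext x
  simp only [snubBaseFaceZero, snubBaseEdge, Set.sUnion_insert, Set.sUnion_singleton,
    Set.smul_set_insert, Set.smul_set_singleton, smul_smul, Matrix.cons_val, Set.mem_union,
    Set.mem_insert_iff, Set.mem_singleton_iff]
  tauto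

theorem snub_base_face_zero_stabilizer_trivial_general {G X : Type*} [Group G] [MulAction G X]
    (s₁ s₂ : G)
    (hs0 : s₁ * s₂ ≠ 1) (hs1 : s₁ ≠ 1)
    (h01 : Subgroup.zpowers (s₁ * s₂) ⊓ Subgroup.zpowers s₁ = ⊥)
    (v : X) (hv : ∀ g : G, g • v = v → g = 1) :
    MulAction.stabilizer G (snubBaseFaceZero s₁ s₂ v) = ⊥ ∧
    (s₁ * s₂) • snubBaseFaceZero s₁ s₂ v ≠ snubBaseFaceZero s₁ s₂ v := by
  have hstab : MulAction.stabilizer G (snubBaseFaceZero s₁ s₂ v) = ⊥ := by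
    refine eq_bot_iff.mpr <| (MulAction.stabilizer_le_stabilizer_sUnion _).trans ?_
    rw [sUnion_snubBaseFaceZero]
    exact (MulAction.stabilizer_triangle_eq_bot hv hs0 hs1
      (mul_ne_one_of_zpowers_inf_eq_bot h01 hs1)).le
  refine ⟨hstab, fun hfix => hs0 ?_⟩
  rw [← Subgroup.mem_bot, ← hstab]
  exact hfix

/-- With `s₀ := s₁s₂` an involution, `s₀, s₁, s₂` nontrivial, the cyclic subgroups they
generate intersecting pairwise trivially, and `v` a point with trivial stabilizer, the
stabilizer of the type-0 base face `F₂⁰ = {e₀, e₁, s₁ • e₂}` is trivial; in particular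
`s₀ • F₂⁰ ≠ F₂⁰`. -/
theorem snub_base_face_zero_stabilizer_trivial {G X : Type*} [Group G] [MulAction G X]
    (s₁ s₂ : G) (h0 : (s₁ * s₂) ^ 2 = 1)
    (hs0 : s₁ * s₂ ≠ 1) (hs1 : s₁ ≠ 1) (hs2 : s₂ ≠ 1)
    (h01 : Subgroup.zpowers (s₁ * s₂) ⊓ Subgroup.zpowers s₁ = ⊥)
    (h02 : Subgroup.zpowers (s₁ * s₂) ⊓ Subgroup.zpowers s₂ = ⊥)
    (h12 : Subgroup.zpowers s₁ ⊓ Subgroup.zpowers s₂ = ⊥)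
    (v : X) (hv : ∀ g : G, g • v = v → g = 1) :
    MulAction.stabilizer G (snubBaseFaceZero s₁ s₂ v) = ⊥ ∧
    (s₁ * s₂) • snubBaseFaceZero s₁ s₂ v ≠ snubBaseFaceZero s₁ s₂ v :=
  snub_base_face_zero_stabilizer_trivial_general s₁ s₂ hs0 hs1 h01 v hv
end

section
/- Let G be a group acting on a set X, let s₁, s₂ ∈ G, set s₀ := s₁ * s₂, and assume s₀² = 1, s₀ ≠ 1, s₁² ≠ 1, s₂² ≠ 1 and that the cyclic subgroups ⟨s₀⟩, ⟨s₁⟩, ⟨s₂⟩ intersect pairwise trivially. Let v ∈ X have trivial stabilizer in G and set e₀ := {v, s₀ • v}, e₁ := {v, s₁ • v}, e₂ := {v, s₂ • v}. Then the set of all G-translates of the base edges that contain v, namely { E ⊆ X : v ∈ E ∧ ∃ g ∈ G, ∃ i ∈ {0,1,2}, E = g • eᵢ }, is exactly the five-element set { e₀, e₁, s₁⁻¹ • e₁, e₂, s₂⁻¹ • e₂ }, and these five subsets of X are pairwise distinct. In particular precisely five edges of the snub S_P(v) contain the vertex v. -/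
open Pointwise

/-- With `s₀ := s₁s₂` a nontrivial involution, `s₁² ≠ 1`, `s₂² ≠ 1`, the cyclic subgroups
`⟨s₀⟩, ⟨s₁⟩, ⟨s₂⟩` intersecting pairwise trivially, and `v` a point with trivial stabilizer,
the `G`-translates of the base edges that contain `v` are exactly the five pairwise distinct
edges `e₀, e₁, s₁⁻¹ • e₁, e₂, s₂⁻¹ • e₂`: the vertex `v` of the snub has degree 5. -/
theorem snub_vertex_degree_five {G X : Type*} [Group G] [MulAction G X]
    (s₁ s₂ : G) (h0 : (s₁ * s₂) ^ 2 = 1) (hs0 : s₁ * s₂ ≠ 1)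
    (h1 : s₁ ^ 2 ≠ 1) (h2 : s₂ ^ 2 ≠ 1)
    (h01 : Subgroup.zpowers (s₁ * s₂) ⊓ Subgroup.zpowers s₁ = ⊥)
    (h02 : Subgroup.zpowers (s₁ * s₂) ⊓ Subgroup.zpowers s₂ = ⊥)
    (h12 : Subgroup.zpowers s₁ ⊓ Subgroup.zpowers s₂ = ⊥)
    (v : X) (hv : ∀ g : G, g • v = v → g = 1) :
    ({E : Set X | v ∈ E ∧ ∃ g : G, ∃ i : Fin 3, E = g • snubBaseEdge s₁ s₂ v i} =
      {snubBaseEdge s₁ s₂ v 0, snubBaseEdge s₁ s₂ v 1, s₁⁻¹ • snubBaseEdge s₁ s₂ v 1,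
       snubBaseEdge s₁ s₂ v 2, s₂⁻¹ • snubBaseEdge s₁ s₂ v 2}) ∧
    ([snubBaseEdge s₁ s₂ v 0, snubBaseEdge s₁ s₂ v 1, s₁⁻¹ • snubBaseEdge s₁ s₂ v 1,
      snubBaseEdge s₁ s₂ v 2, s₂⁻¹ • snubBaseEdge s₁ s₂ v 2] : List (Set X)).Nodup := by
  set t₀ := s₁ * s₂ with ht₀
  have ne1 : s₁ ≠ 1 := fun h => h1 (by rw [h, one_pow])
  have ne2 : s₂ ≠ 1 := fun h => h2 (by rw [h, one_pow])
  -- key : equality of pair-edges forces equality of the group elements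
  have key : ∀ a b : G, ({v, a • v} : Set X) = {v, b • v} → a = b := by
    intro a b h
    have hb : b • v ∈ ({v, a • v} : Set X) := by
      rw [h]; exact Set.mem_insert_iff.mpr (Or.inr rfl)
    rw [Set.mem_insert_iff, Set.mem_singleton_iff] at hb
    rcases hb with hb | hb
    · have hb1 : b = 1 := hv b hb
      have ha : a • v ∈ ({v, b • v} : Set X) := by
        rw [← h]; exact Set.mem_insert_iff.mpr (Or.inr rfl)
      rw [Set.mem_insert_iff, Set.mem_singleton_iff, hb1, one_smul, or_self] at ha
      rw [hb1]; exact hv a ha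
    · have h' : (b⁻¹ * a) • v = v := by rw [mul_smul, ← hb, inv_smul_smul]
      have := hv _ h'
      rw [inv_mul_eq_one] at this
      exact this.symm
  -- pairwise distinctness of group elements from trivial intersections
  have hd : ∀ (a b : G), Subgroup.zpowers a ⊓ Subgroup.zpowers b = ⊥ → a ≠ 1 →
      a ≠ b ∧ a ≠ b⁻¹ := by
    intro a b hab ha
    constructor
    · rintro rfl
      have : a ∈ Subgroup.zpowers a ⊓ Subgroup.zpowers a :=
        ⟨Subgroup.mem_zpowers a, Subgroup.mem_zpowers a⟩
      rw [hab, Subgroup.mem_bot] at this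
      exact ha this
    · rintro rfl
      have : b⁻¹ ∈ Subgroup.zpowers b⁻¹ ⊓ Subgroup.zpowers b :=
        ⟨Subgroup.mem_zpowers _, Subgroup.inv_mem _ (Subgroup.mem_zpowers b)⟩
      rw [hab, Subgroup.mem_bot] at this
      exact ha this
  obtain ⟨d01a, d01b⟩ := hd _ _ h01 hs0
  obtain ⟨d02a, d02b⟩ := hd _ _ h02 hs0
  obtain ⟨d12a, d12b⟩ := hd _ _ h12 ne1
  have d1 : s₁ ≠ s₁⁻¹ := fun h => h1 (by rw [sq]; exact mul_eq_one_iff_eq_inv.mpr h)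
  have d2 : s₂ ≠ s₂⁻¹ := fun h => h2 (by rw [sq]; exact mul_eq_one_iff_eq_inv.mpr h)
  have d12c : s₁⁻¹ ≠ s₂ := fun h => d12b (by rw [← h, inv_inv])
  have d12d : s₁⁻¹ ≠ s₂⁻¹ := fun h => d12a (inv_injective h)
  have ht0inv : t₀⁻¹ = t₀ := by
    rw [sq] at h0
    exact (inv_eq_of_mul_eq_one_right h0).symm ▸ (inv_eq_of_mul_eq_one_left h0)
  -- normal forms of the edges
  have E0 : snubBaseEdge s₁ s₂ v 0 = {v, t₀ • v} := rfl
  have E1 : snubBaseEdge s₁ s₂ v 1 = {v, s₁ • v} := rfl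
  have E2 : snubBaseEdge s₁ s₂ v 2 = {v, s₂ • v} := rfl
  have htr : ∀ g t : G, g • ({v, t • v} : Set X) = {g • v, (g * t) • v} := by
    intro g t
    rw [Set.smul_set_insert, Set.smul_set_singleton, mul_smul]
  have hinv : ∀ t : G, t⁻¹ • ({v, t • v} : Set X) = {v, t⁻¹ • v} := by
    intro t
    rw [htr, inv_mul_cancel, one_smul, Set.pair_comm]
  have E1' : s₁⁻¹ • snubBaseEdge s₁ s₂ v 1 = {v, s₁⁻¹ • v} := by rw [E1, hinv]
  have E2' : s₂⁻¹ • snubBaseEdge s₁ s₂ v 2 = {v, s₂⁻¹ • v} := by rw [E2, hinv]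
  have E0' : t₀⁻¹ • snubBaseEdge s₁ s₂ v 0 = {v, t₀ • v} := by
    rw [E0, hinv, ht0inv]
  -- solving v ∈ g • {v, t•v}
  have hsolve : ∀ g t : G, v ∈ g • ({v, t • v} : Set X) → g = 1 ∨ g = t⁻¹ := by
    intro g t h
    rw [Set.mem_smul_set_iff_inv_smul_mem, Set.mem_insert_iff, Set.mem_singleton_iff] at h
    rcases h with h | h
    · exact Or.inl (inv_eq_one.mp (hv _ h))
    · right
      have h' : (t⁻¹ * g⁻¹) • v = v := by rw [mul_smul, h, inv_smul_smul]
      have := hv _ h'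
      rw [inv_mul_eq_one] at this
      rw [this, inv_inv]
  constructor
  · ext E
    simp only [Set.mem_setOf_eq, Set.mem_insert_iff, Set.mem_singleton_iff]
    constructor
    · rintro ⟨hvE, g, i, rfl⟩
      fin_cases i
      · rcases hsolve g t₀ hvE with rfl | rfl
        · left; exact one_smul G _
        · left; exact E0'.trans E0.symm
      · rcases hsolve g s₁ hvE with rfl | rfl
        · right; left; exact one_smul G _
        · right; right; left; rfl
      · rcases hsolve g s₂ hvE with rfl | rfl
        · right; right; right; left; exact one_smul G _
        · right; right; right; right; rfl
    · rintro (rfl | rfl | rfl | rfl | rfl)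
      · exact ⟨Set.mem_insert _ _, 1, 0, (one_smul _ _).symm⟩
      · exact ⟨Set.mem_insert _ _, 1, 1, (one_smul _ _).symm⟩
      · refine ⟨?_, s₁⁻¹, 1, rfl⟩
        rw [E1']; exact Set.mem_insert _ _
      · exact ⟨Set.mem_insert _ _, 1, 2, (one_smul _ _).symm⟩
      · refine ⟨?_, s₂⁻¹, 2, rfl⟩
        rw [E2']; exact Set.mem_insert _ _
  · rw [E1', E2', E0, E1, E2]
    simp only [List.nodup_cons, List.mem_cons, List.mem_singleton, List.not_mem_nil,
      List.nodup_nil, and_true, not_or]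
    refine ⟨⟨?_, ?_, ?_, ?_⟩, ⟨?_, ?_, ?_⟩, ⟨?_, ?_⟩, ?_⟩
    · exact fun h => d01a (key _ _ h)
    · exact fun h => d01b (key _ _ h)
    · exact fun h => d02a (key _ _ h)
    · exact ⟨fun h => d02b (key _ _ h), not_false⟩
    · exact fun h => d1 (key _ _ h)
    · exact fun h => d12a (key _ _ h)
    · exact ⟨fun h => d12b (key _ _ h), not_false⟩
    · exact fun h => d12c (key _ _ h)
    · exact ⟨fun h => d12d (key _ _ h), not_false⟩
    · exact ⟨⟨fun h => d2 (key _ _ h), not_false⟩, not_false⟩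
end

section
/- Let G be a group acting on a set X, let v ∈ X, let s₁, s₂ ∈ G, set s₀ := s₁ * s₂, and assume s₀² = 1. Define e₀ := {v, s₀ • v}, e₁ := {v, s₁ • v}, e₂ := {v, s₂ • v}, F₂¹ := { s₁ᵏ • e₁ : k ∈ ℤ }, F₂² := { s₂ᵏ • e₂ : k ∈ ℤ }, F₂⁰ := {e₀, e₁, s₁ • e₂}. Define the dual base data using the generators s₁' := s₂⁻¹ and s₂' := s₁⁻¹ (note s₁' * s₂' = s₀⁻¹ = s₀): e₁' := {v, s₂⁻¹ • v}, e₂' := {v, s₁⁻¹ • v}, F₂'¹ := { (s₂⁻¹)ᵏ • e₁' : k ∈ ℤ }, F₂'² := { (s₁⁻¹)ᵏ • e₂' : k ∈ ℤ }, F₂'⁰ := { e₀, e₁', s₂⁻¹ • e₂' }. Then F₂'¹ = F₂², F₂'² = F₂¹, and F₂'⁰ = s₀ • F₂⁰. Consequently the snub built from the dual generator pair (s₂⁻¹, s₁⁻¹) has exactly the same G-orbits of faces as the snub built from (s₁, s₂), with the roles of type-1 and type-2 faces interchanged. -/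
open Pointwise

private lemma snub_pair {G X : Type*} [Group G] [MulAction G X] (s : G) (v : X) :
    ({v, s⁻¹ • v} : Set X) = s⁻¹ • ({v, s • v} : Set X) := by
  rw [Set.smul_set_insert, Set.smul_set_singleton, smul_smul, inv_mul_cancel, one_smul,
    Set.pair_comm]

private lemma snub_aux' {G X : Type*} [Group G] [MulAction G X] (s : G) (v : X) :
    {E : Set X | ∃ k : ℤ, E = (s⁻¹) ^ k • ({v, s⁻¹ • v} : Set X)} =
    {E : Set X | ∃ k : ℤ, E = s ^ k • ({v, s • v} : Set X)} := by
  ext E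
  constructor
  · rintro ⟨k, rfl⟩
    refine ⟨-(k + 1), ?_⟩
    rw [snub_pair, smul_smul]
    congr 1
    group
  · rintro ⟨k, rfl⟩
    refine ⟨-(k + 1), ?_⟩
    rw [snub_pair, smul_smul]
    congr 1
    group

/-- The base faces of the snub built from the dual generator pair `(s₂⁻¹, s₁⁻¹)` coincide
with those built from `(s₁, s₂)`, with the roles of type-1 and type-2 faces interchanged:
`F₂'¹ = F₂²`, `F₂'² = F₂¹`, and `F₂'⁰ = s₀ • F₂⁰` where `s₀ := s₁ * s₂` is an involution. -/
theorem snub_of_dual_generators {G X : Type*} [Group G] [MulAction G X]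
    (s₁ s₂ : G) (v : X) (h0 : (s₁ * s₂) ^ 2 = 1) :
    ({E : Set X | ∃ k : ℤ, E = (s₂⁻¹) ^ k • ({v, s₂⁻¹ • v} : Set X)} =
      {E : Set X | ∃ k : ℤ, E = s₂ ^ k • ({v, s₂ • v} : Set X)}) ∧
    ({E : Set X | ∃ k : ℤ, E = (s₁⁻¹) ^ k • ({v, s₁⁻¹ • v} : Set X)} =
      {E : Set X | ∃ k : ℤ, E = s₁ ^ k • ({v, s₁ • v} : Set X)}) ∧
    (({({v, (s₁ * s₂) • v} : Set X), ({v, s₂⁻¹ • v} : Set X),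
        s₂⁻¹ • ({v, s₁⁻¹ • v} : Set X)} : Set (Set X)) =
      (s₁ * s₂) • ({({v, (s₁ * s₂) • v} : Set X), ({v, s₁ • v} : Set X),
        s₁ • ({v, s₂ • v} : Set X)} : Set (Set X))) := by
  refine ⟨snub_aux' s₂ v, snub_aux' s₁ v, ?_⟩
  set s₀ := s₁ * s₂ with hs₀
  have hsq : s₀ * s₀ = 1 := by rw [← sq]; exact h0
  have hinv : s₀⁻¹ = s₀ := inv_eq_of_mul_eq_one_left hsq
  have h21 : s₀ * s₁ = s₂⁻¹ := by
    rw [← hinv, hs₀]; group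
  have e0 : (s₀ * s₀) • v = v := by rw [hsq, one_smul]
  have e1 : (s₀ * s₁) • v = s₂⁻¹ • v := by rw [h21]
  have e2 : (s₂⁻¹ * s₁⁻¹) • v = s₀ • v := by
    congr 1
    rw [← hinv, hs₀]; group
  simp only [Set.smul_set_insert, Set.smul_set_singleton, smul_smul]
  rw [e0, e1, e2, Set.pair_comm (s₀ • v) v, Set.pair_comm (s₂⁻¹ • v) v,
    Set.pair_comm (s₀ • v) (s₂⁻¹ • v)]
  ext E
  simp only [Set.mem_insert_iff, Set.mem_singleton_iff]
  tauto
end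

section
/- Let c ∈ EuclideanSpace ℝ (Fin 2) and let v : ZMod 5 → EuclideanSpace ℝ (Fin 2) be an injective map such that all five points lie on a common circle centered at c (there is r with dist (v i) c = r for all i) and all five sides have the same length (there is d with dist (v i) (v (i + 1)) = d for all i). Then there exists an isometry ρ of the Euclidean plane (an isometric equivalence of EuclideanSpace ℝ (Fin 2) with itself) such that ρ c = c and ρ (v i) = v (i + 1) for every i ∈ ZMod 5. That is, an equilateral pentagon inscribed in a circle is a regular pentagon or a regular pentagram. -/
/-!
Identify the plane with `ℂ` and put the center at `0`. The ratios `q i = z (i + 1) / z i` of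
consecutive vertices are unit complex numbers at the common distance `d / r` from `1`, so
consecutive ratios are equal or conjugate. Conjugate ratios `q (i + 1) = (q i)⁻¹` would give
`z (i + 2) = z i`, which injectivity forbids; hence all ratios equal one `w`, and the rotation
`z ↦ w z` about the center advances the vertices.
-/

open Complex Function

theorem ZMod.apply_eq_apply_zero_of_periodic_one {n : ℕ} {α : Type*} {f : ZMod n → α}
    (hf : Periodic f 1) (i : ZMod n) : f i = f 0 := by
  simpa [ZMod.intCast_zmod_cast] using hf.int_mul_eq (ZMod.cast i : ℤ)

theorem Complex.eq_or_mul_eq_one_of_norm_sub_one_eq {a b : ℂ} (ha : ‖a‖ = 1) (hb : ‖b‖ = 1)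
    (h : ‖a - 1‖ = ‖b - 1‖) : b = a ∨ b * a = 1 := by
  have hsq {x : ℂ} (hx : ‖x‖ = 1) : x.re * x.re + x.im * x.im = 1 := by
    rw [← normSq_apply, normSq_eq_norm_sq, hx, one_pow]
  have hre : b.re = a.re := by
    have h2 := congrArg (· ^ 2) h
    simp only [Complex.sq_norm, normSq_apply, sub_re, sub_im, one_re, one_im] at h2
    linear_combination (h2 - hsq ha + hsq hb) / 2
  have him : (b.im - a.im) * (b.im + a.im) = 0 := by
    linear_combination hsq hb - hsq ha - (b.re + a.re) * hre
  rcases mul_eq_zero.1 him with h | h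
  · exact Or.inl (Complex.ext hre (by linarith))
  · right
    have hb' : b = starRingEnd ℂ a := Complex.ext (by simpa using hre) (by simp; linarith)
    rw [hb', conj_mul', ha]
    norm_num

theorem Complex.exists_circle_mul_of_norm_eq_of_norm_sub_eq {n : ℕ} (hn : 3 ≤ n)
    {z : ZMod n → ℂ} (hz : Injective z) {r d : ℝ} (hr : ∀ i, ‖z i‖ = r)
    (hd : ∀ i, ‖z (i + 1) - z i‖ = d) :
    ∃ w : Circle, ∀ i, z (i + 1) = w * z i := by
  have h2 : (2 : ZMod n) ≠ 0 := by
    rw [← Nat.cast_ofNat, Ne, ZMod.natCast_eq_zero_iff]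
    exact fun h => by have := Nat.le_of_dvd two_pos h; omega
  have hr0 : r ≠ 0 := by
    rintro rfl
    have h1 : (1 : ZMod n) = 0 :=
      hz ((norm_eq_zero.1 (hr 1)).trans (norm_eq_zero.1 (hr 0)).symm)
    exact h2 (by rw [← one_add_one_eq_two, h1, add_zero])
  have hz0 (i : ZMod n) : z i ≠ 0 := norm_ne_zero_iff.1 (hr i ▸ hr0)
  set q : ZMod n → ℂ := fun i => z (i + 1) / z i
  have hq (i : ZMod n) : z (i + 1) = q i * z i := (div_mul_cancel₀ _ (hz0 i)).symm
  have hq1 (i : ZMod n) : ‖q i‖ = 1 := by simp only [q, norm_div, hr, div_self hr0]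
  have hqsub (i : ZMod n) : ‖q i - 1‖ = d / r := by
    simp only [q, div_sub_one (hz0 i), norm_div, hd, hr]
  have hper : Periodic q 1 := by
    intro i
    refine (eq_or_mul_eq_one_of_norm_sub_one_eq (hq1 i) (hq1 (i + 1))
      ((hqsub i).trans (hqsub (i + 1)).symm)).resolve_right fun hinv => h2 ?_
    have : z (i + 2) = z i := by
      rw [← one_add_one_eq_two, ← add_assoc, hq, hq, ← mul_assoc, hinv, one_mul]
    simpa using hz this
  exact ⟨⟨q 0, mem_sphere_zero_iff_norm.2 (hq1 0)⟩, fun i => by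
    rw [hq, ZMod.apply_eq_apply_zero_of_periodic_one hper]⟩

/-- An equilateral pentagon inscribed in a circle in the Euclidean plane is a regular
pentagon or a regular pentagram: there is an isometry of the plane fixing the center and
cyclically advancing the five vertices. -/
theorem equilateral_pentagon_inscribed_in_circle_is_regular
    (c : EuclideanSpace ℝ (Fin 2)) (v : ZMod 5 → EuclideanSpace ℝ (Fin 2))
    (hinj : Function.Injective v)
    (hcirc : ∃ r : ℝ, ∀ i : ZMod 5, dist (v i) c = r)
    (hside : ∃ d : ℝ, ∀ i : ZMod 5, dist (v i) (v (i + 1)) = d) :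
    ∃ ρ : EuclideanSpace ℝ (Fin 2) ≃ᵢ EuclideanSpace ℝ (Fin 2),
      ρ c = c ∧ ∀ i : ZMod 5, ρ (v i) = v (i + 1) := by
  obtain ⟨r, hr⟩ := hcirc
  obtain ⟨d, hd⟩ := hside
  let e := Complex.orthonormalBasisOneI.repr
  obtain ⟨w, hw⟩ := exists_circle_mul_of_norm_eq_of_norm_sub_eq (z := fun i => e.symm (v i - c))
    (r := r) (d := d) (by norm_num) (e.symm.injective.comp (sub_left_injective.comp hinj))
    (fun i => by rw [e.symm.norm_map, ← dist_eq_norm, hr])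
    (fun i => by rw [← map_sub, e.symm.norm_map, sub_sub_sub_cancel_right, ← dist_eq_norm,
      dist_comm, hd])
  let L := e.symm.trans ((rotation w).trans e)
  refine ⟨(IsometryEquiv.subRight c).trans (L.toIsometryEquiv.trans (IsometryEquiv.addRight c)),
    by simp, fun i => ?_⟩
  change e (w * e.symm (v i - c)) + c = v (i + 1)
  rw [← hw i, e.apply_symm_apply, sub_add_cancel]
end
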